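/- Let U_1, …, U_m be nonempty closed convex subsets of R^n with nonempty intersection U. Then for any starting point x_1 ∈ R^n, the sequence (x_k) generated by the Parallel Polyhedral Projection Method converges to a point x̄ ∈ U. -/

import Mathlib

open Metric Filter Topology

/-- `p` is the metric projection of `z` onto `X`. -/
def IsProj {n : ℕ} (X : Set (EuclideanSpace ℝ (Fin n))) (z p : EuclideanSpace ℝ (Fin n)) : Prop :=
  p ∈ X ∧ ∀ y ∈ X, dist z p ≤ dist z y

/-!
Every point `v` of `U` lies in each half-space `⟨x_k - P_{U_i} x_k, z - P_{U_i} x_k⟩ ≤ 0`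
(variational inequality of the projection onto `U_i`), hence in the polyhedron `Ω_k`.
The variational inequality of the projection onto `Ω_k` then gives
`‖x_k - x_{k+1}‖² + ‖x_{k+1} - v‖² ≤ ‖x_k - v‖²`: the sequence is Fejér monotone with respect
to `U` and its steps tend to `0`. Since `x_{k+1} ∈ Ω_k`, the same inequality bounds
`‖x_k - P_{U_i} x_k‖` by the step `‖x_k - x_{k+1}‖`, so every cluster point lies in every
(closed) `U_i`. A bounded Fejér monotone sequence with a cluster point in `U` converges to it.
-/

section InnerProductSpace

variable {E : Type*} [NormedAddCommGroup E] [InnerProductSpace ℝ E]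

lemma convex_setOf_inner_sub_nonpos (a b : E) :
    Convex ℝ {z : E | inner ℝ a (z - b) ≤ (0 : ℝ)} := by
  simp_rw [inner_sub_right, sub_nonpos]
  exact convex_halfSpace_le (innerₗ E a).isLinear _

lemma norm_sub_sq_add_norm_sub_sq_le_of_inner_nonpos {x y v : E}
    (h : inner ℝ (x - y) (v - y) ≤ (0 : ℝ)) :
    ‖x - y‖ ^ 2 + ‖y - v‖ ^ 2 ≤ ‖x - v‖ ^ 2 := by
  have hflip : inner ℝ (x - y) (y - v) = -inner ℝ (x - y) (v - y) := by
    rw [← inner_neg_right, neg_sub]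
  rw [← sub_add_sub_cancel x y v, norm_add_sq_real, hflip]
  linarith

end InnerProductSpace

lemma IsProj.inner_sub_nonpos {n : ℕ} {X : Set (EuclideanSpace ℝ (Fin n))} (hX : Convex ℝ X)
    {z q : EuclideanSpace ℝ (Fin n)} (h : IsProj X z q) :
    ∀ w ∈ X, inner ℝ (z - q) (w - q) ≤ (0 : ℝ) := by
  have : Nonempty X := ⟨⟨q, h.1⟩⟩
  rw [← norm_eq_iInf_iff_real_inner_le_zero hX h.1]
  refine le_antisymm (le_ciInf fun w => by simpa [dist_eq_norm] using h.2 w w.2) ?_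
  exact ciInf_le ⟨0, Set.forall_mem_range.2 fun _ => norm_nonneg _⟩ (⟨q, h.1⟩ : X)

lemma tendsto_zero_of_succ_add_le {d e : ℕ → ℝ} (hd : ∀ k, 0 ≤ d k) (he : ∀ k, 0 ≤ e k)
    (h : ∀ k, d (k + 1) + e k ≤ d k) : Tendsto e atTop (𝓝 0) := by
  have hanti : Antitone d := antitone_nat_of_succ_le fun k => by linarith [he k, h k]
  have hlim := tendsto_atTop_ciInf hanti ⟨0, Set.forall_mem_range.2 hd⟩
  have hdiff : Tendsto (fun k => d k - d (k + 1)) atTop (𝓝 0) := by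
    simpa using hlim.sub (hlim.comp (tendsto_add_atTop_nat 1))
  exact squeeze_zero he (fun k => by linarith [h k]) hdiff

section Fejer

variable {X : Type*} [MetricSpace X] {x : ℕ → X}

lemma tendsto_of_antitone_dist_of_subseq {a : X} (hanti : Antitone fun k => dist (x k) a)
    {φ : ℕ → ℕ} (hφ : StrictMono φ) (hsub : Tendsto (x ∘ φ) atTop (𝓝 a)) :
    Tendsto x atTop (𝓝 a) := by
  rw [tendsto_iff_dist_tendsto_zero] at hsub ⊢
  have hlim := tendsto_atTop_ciInf hanti ⟨0, Set.forall_mem_range.2 fun _ => dist_nonneg⟩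
  rwa [tendsto_nhds_unique (hlim.comp hφ.tendsto_atTop) hsub] at hlim

lemma exists_tendsto_of_antitone_dist [ProperSpace X] {S : Set X} (hS : S.Nonempty)
    (hfejer : ∀ v ∈ S, Antitone fun k => dist (x k) v)
    (hcluster : ∀ a (φ : ℕ → ℕ), StrictMono φ → Tendsto (x ∘ φ) atTop (𝓝 a) → a ∈ S) :
    ∃ a ∈ S, Tendsto x atTop (𝓝 a) := by
  obtain ⟨v, hv⟩ := hS
  have hbdd : ∀ k, x k ∈ closedBall v (dist (x 0) v) := fun k => hfejer v hv (Nat.zero_le k)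
  obtain ⟨a, -, φ, hφ, hsub⟩ := tendsto_subseq_of_bounded isBounded_closedBall hbdd
  have ha := hcluster a φ hφ hsub
  exact ⟨a, ha, tendsto_of_antitone_dist_of_subseq (hfejer a ha) hφ hsub⟩

end Fejer

theorem stmt5_general {n m : ℕ} (U : Fin m → Set (EuclideanSpace ℝ (Fin n)))
    (hcl : ∀ i, IsClosed (U i)) (hcv : ∀ i, Convex ℝ (U i))
    (hU : (⋂ i, U i).Nonempty)
    (x : ℕ → EuclideanSpace ℝ (Fin n)) (p : ℕ → Fin m → EuclideanSpace ℝ (Fin n))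
    (hp : ∀ k i, IsProj (U i) (x k) (p k i))
    (hstep : ∀ k, IsProj
      (⋂ i, {z : EuclideanSpace ℝ (Fin n) | inner ℝ (x k - p k i) (z - p k i) ≤ (0 : ℝ)})
      (x k) (x (k + 1))) :
    ∃ xbar ∈ ⋂ i, U i, Tendsto x atTop (nhds xbar) := by
  have hdescent : ∀ k, ∀ v ∈ ⋂ i, U i,
      ‖x k - x (k + 1)‖ ^ 2 + ‖x (k + 1) - v‖ ^ 2 ≤ ‖x k - v‖ ^ 2 := fun k v hv =>
    norm_sub_sq_add_norm_sub_sq_le_of_inner_nonpos <|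
      (hstep k).inner_sub_nonpos (convex_iInter fun _ => convex_setOf_inner_sub_nonpos _ _) v <|
        Set.mem_iInter.2 fun i => (hp k i).inner_sub_nonpos (hcv i) v (Set.mem_iInter.1 hv i)
  have hfejer : ∀ v ∈ ⋂ i, U i, Antitone fun k => dist (x k) v := fun v hv =>
    antitone_nat_of_succ_le fun k => by
      simp only [dist_eq_norm]
      exact (sq_le_sq₀ (norm_nonneg _) (norm_nonneg _)).1 (by nlinarith [hdescent k v hv])
  obtain ⟨u, hu⟩ := hU
  have hsteps : Tendsto (fun k => ‖x k - x (k + 1)‖ ^ 2) atTop (𝓝 0) :=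
    tendsto_zero_of_succ_add_le (d := fun k => ‖x k - u‖ ^ 2) (fun _ => sq_nonneg _)
      (fun _ => sq_nonneg _)
      fun k => by linarith [hdescent k u hu]
  have hgap : ∀ i, Tendsto (fun k => dist (x k) (p k i)) atTop (𝓝 0) := fun i => by
    have hsq : Tendsto (fun k => ‖x k - p k i‖ ^ 2) atTop (𝓝 0) :=
      squeeze_zero (fun _ => sq_nonneg _) (fun k => by
        nlinarith [norm_sub_sq_add_norm_sub_sq_le_of_inner_nonpos
          (Set.mem_iInter.1 (hstep k).1 i), sq_nonneg ‖p k i - x (k + 1)‖]) hsteps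
    simpa [dist_eq_norm, Real.sqrt_sq (norm_nonneg _)] using hsq.sqrt
  refine exists_tendsto_of_antitone_dist ⟨u, hu⟩ hfejer fun a φ hφ hsub => ?_
  exact Set.mem_iInter.2 fun i => (hcl i).mem_of_tendsto
    (hsub.congr_dist ((hgap i).comp hφ.tendsto_atTop)) (Eventually.of_forall fun j => (hp (φ j) i).1)

/-- Global convergence of 3PM. -/
theorem stmt5 {n m : ℕ} (U : Fin m → Set (EuclideanSpace ℝ (Fin n)))
    (hne : ∀ i, (U i).Nonempty) (hcl : ∀ i, IsClosed (U i)) (hcv : ∀ i, Convex ℝ (U i))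
    (hU : (⋂ i, U i).Nonempty)
    (x : ℕ → EuclideanSpace ℝ (Fin n)) (p : ℕ → Fin m → EuclideanSpace ℝ (Fin n))
    (hp : ∀ k i, IsProj (U i) (x k) (p k i))
    (hstep : ∀ k, IsProj
      (⋂ i, {z : EuclideanSpace ℝ (Fin n) | inner ℝ (x k - p k i) (z - p k i) ≤ (0 : ℝ)})
      (x k) (x (k + 1))) :
    ∃ xbar ∈ ⋂ i, U i, Tendsto x atTop (nhds xbar) :=
  stmt5_general U hcl hcv hU x p hp hstep
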